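/- arXiv:1808.03364 — 5 statements merged into one kernel-verified Lean document; each statement's English description precedes it below -/
import Mathlib

section
/- (Deterministic convexity lemma.) Let d ≥ 1 and let S₁, S₂ : ℝ^d → ℝ with S₁ convex. Set δ := sup_{θ ∈ ℝ^d} |S₁(θ) − S₂(θ)| and assume δ < ∞. Suppose θ̂₁ ∈ ℝ^d and ε > 0 satisfy S₁(θ̂₁) + 2δ < inf{ S₁(θ) : ‖θ − θ̂₁‖ = ε }. Then every minimizer θ̂₂ of S₂ over ℝ^d (i.e., S₂(θ̂₂) ≤ S₂(θ) for all θ) satisfies ‖θ̂₂ − θ̂₁‖ < ε. -/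
/-- Deterministic convexity lemma (quantitative core of Lemma A.1): if `S₁` is convex,
`δ = sup_θ |S₁ θ - S₂ θ|` is finite, and `S₁ θ̂₁ + 2δ` is strictly below the infimum of `S₁`
on the sphere of radius `ε` around `θ̂₁`, then any global minimizer of `S₂` lies within
distance `ε` of `θ̂₁`. -/
theorem minimizers_close_of_uniformly_close
    (d : ℕ) (hd : 1 ≤ d) (S₁ S₂ : EuclideanSpace ℝ (Fin d) → ℝ)
    (hconv : ConvexOn ℝ Set.univ S₁)
    (hbdd : BddAbove (Set.range fun θ => |S₁ θ - S₂ θ|))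
    (θhat₁ : EuclideanSpace ℝ (Fin d)) (ε : ℝ) (hε : 0 < ε)
    (hgap : S₁ θhat₁ + 2 * (⨆ θ, |S₁ θ - S₂ θ|) <
      sInf (S₁ '' {θ | ‖θ - θhat₁‖ = ε}))
    (θhat₂ : EuclideanSpace ℝ (Fin d)) (hmin : ∀ θ, S₂ θhat₂ ≤ S₂ θ) :
    ‖θhat₂ - θhat₁‖ < ε := by
  set δ := ⨆ θ, |S₁ θ - S₂ θ| with hδ
  have habs : ∀ θ, |S₁ θ - S₂ θ| ≤ δ := fun θ =>
    le_ciSup hbdd θ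
  have hδ0 : 0 ≤ δ := le_trans (abs_nonneg _) (habs θhat₁)
  by_contra h
  push_neg at h
  set r := ‖θhat₂ - θhat₁‖ with hr
  have hr0 : 0 < r := lt_of_lt_of_le hε h
  set t : ℝ := ε / r with ht
  have ht0 : 0 < t := div_pos hε hr0
  have ht1 : t ≤ 1 := (div_le_one hr0).mpr h
  set θ' := (1 - t) • θhat₁ + t • θhat₂ with hθ'
  -- θ' is on the sphere
  have hsphere : ‖θ' - θhat₁‖ = ε := by
    have : θ' - θhat₁ = t • (θhat₂ - θhat₁) := by
      rw [hθ']; module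
    rw [this, norm_smul, Real.norm_eq_abs, abs_of_pos ht0, ← hr, ht]
    field_simp
  -- sphere is compact, S₁ continuous, so image bounded below
  have hcont : ContinuousOn S₁ Set.univ :=
    hconv.continuousOn isOpen_univ
  have hcompact : IsCompact {θ : EuclideanSpace ℝ (Fin d) | ‖θ - θhat₁‖ = ε} := by
    have : {θ : EuclideanSpace ℝ (Fin d) | ‖θ - θhat₁‖ = ε} = Metric.sphere θhat₁ ε := by
      ext θ; simp [Metric.mem_sphere, dist_eq_norm]
    rw [this]
    exact isCompact_sphere _ _
  have hbb : BddBelow (S₁ '' {θ | ‖θ - θhat₁‖ = ε}) :=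
    (hcompact.image_of_continuousOn (hcont.mono (Set.subset_univ _))).bddBelow
  have hle : sInf (S₁ '' {θ | ‖θ - θhat₁‖ = ε}) ≤ S₁ θ' :=
    csInf_le hbb ⟨θ', hsphere, rfl⟩
  -- convexity bound
  have hcv : S₁ θ' ≤ (1 - t) * S₁ θhat₁ + t * S₁ θhat₂ :=
    hconv.2 (Set.mem_univ θhat₁) (Set.mem_univ θhat₂)
      (by linarith) (le_of_lt ht0) (by ring)
  -- S₁ θhat₂ ≤ S₁ θhat₁ + 2δ
  have h1 : S₁ θhat₂ - S₂ θhat₂ ≤ δ := le_trans (le_abs_self _) (habs _)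
  have h2 : S₂ θhat₁ - S₁ θhat₁ ≤ δ := by
    have := habs θhat₁; rw [abs_sub_comm] at this; exact le_trans (le_abs_self _) this
  have h3 : S₂ θhat₂ ≤ S₂ θhat₁ := hmin θhat₁
  nlinarith [hgap, hle, hcv]
end

section
/- (Proposition 1: unbiasedness of the inverse-probability-weighted penalized moment function.) Let (Ω, 𝔽, P) be a probability space, τ ∈ (0,1), σ₀ > 0 a constant, λ ≥ 0, θ₀ ∈ ℝ^p, and Z ∈ ℝ^p a fixed vector. Let X : Ω → ℝ^p be a random vector with E‖X‖ < ∞, Y : Ω → ℝ a random variable, W : Ω → E a random element of a measurable space, S : Ω → {0,1} a random variable, π : Ω → ℝ a σ(W, X)-measurable random variable with π ≥ σ₀ almost surely, and α : Ω → ℝ a random variable. Assume: (i) E[S | σ(W, X)] = π almost surely; (ii) Y is σ(W, X)-measurable; (iii) P(Y ≤ X'θ₀ | X) = τ almost surely; (iv) P(α ≤ 0) = τ. Then E[(S/π)·X·ψ_τ(Y − X'θ₀) − λ·Z·ψ_τ(α)] = 0 (the zero vector in ℝ^p). -/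
open MeasureTheory RealInnerProductSpace

/-!
Conditioning on `σ(W, X)`, with respect to which `Y`, `X` and (a.e.) `π` are measurable,
replaces the selection indicator `S` by its conditional mean `π`, so the inverse-probability
weight `S / π` averages out. Conditioning what remains, `ψ_τ(Y - X'θ₀) X`, on `σ(X)` leaves
`(τ - P(Y ≤ X'θ₀ | X)) X = 0`, and the penalty term has mean `λ (τ - P(α ≤ 0)) Z = 0`.
-/

/-- The quantile influence function `ψ_τ(u) = τ - 1{u ≤ 0}`. -/
noncomputable def psi (τ u : ℝ) : ℝ := τ - if u ≤ 0 then 1 else 0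

lemma abs_psi_le (τ u : ℝ) : |psi τ u| ≤ |τ| + 1 := by
  unfold psi
  split_ifs
  · exact (abs_sub _ _).trans (by simp)
  · simp

lemma measurable_psi (τ : ℝ) : Measurable (psi τ) :=
  measurable_const.sub (measurable_const.ite measurableSet_Iic measurable_const)

section

variable {Ω : Type*} {m m₀ : MeasurableSpace Ω} {μ : Measure Ω}

lemma integrable_psi_comp [IsFiniteMeasure μ] (τ : ℝ) {U : Ω → ℝ} (hU : Measurable U) :
    Integrable (fun ω => psi τ (U ω)) μ :=
  .of_bound ((measurable_psi τ).comp hU).aestronglyMeasurable (|τ| + 1)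
    (ae_of_all _ fun _ => abs_psi_le _ _)

lemma integrable_ite_le [IsFiniteMeasure μ] {Y T : Ω → ℝ} (hY : Measurable Y)
    (hT : Measurable T) :
    Integrable (fun ω => if Y ω ≤ T ω then (1 : ℝ) else 0) μ :=
  .of_bound
    (measurable_const.ite (measurableSet_le hY hT) measurable_const).aestronglyMeasurable 1
    (ae_of_all _ fun ω => by split_ifs <;> simp)

lemma integral_psi_comp [IsProbabilityMeasure μ] (τ : ℝ) {U : Ω → ℝ} (hU : Measurable U) :
    ∫ ω, psi τ (U ω) ∂μ = τ - μ.real {ω | U ω ≤ 0} := by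
  have hind : (fun ω => if U ω ≤ 0 then (1 : ℝ) else 0) = {ω | U ω ≤ 0}.indicator 1 := by
    ext ω; simp [Set.indicator_apply]
  simp only [psi]
  rw [integral_sub (integrable_const τ) (integrable_ite_le hU measurable_const), hind,
    integral_indicator_one (measurableSet_le hU measurable_const)]
  simp

lemma condExp_psi_sub_ae_eq_zero [IsFiniteMeasure μ] (hm : m ≤ m₀) {τ : ℝ} {Y T : Ω → ℝ}
    (hY : Measurable Y) (hT : Measurable T)
    (hq : μ[fun ω => if Y ω ≤ T ω then (1 : ℝ) else 0 | m] =ᵐ[μ] fun _ => τ) :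
    μ[fun ω => psi τ (Y ω - T ω) | m] =ᵐ[μ] 0 := by
  have hψ : (fun ω => psi τ (Y ω - T ω))
      = (fun _ => τ) - fun ω => if Y ω ≤ T ω then (1 : ℝ) else 0 := by
    ext ω; simp [psi]
  rw [hψ]
  filter_upwards [condExp_sub (integrable_const τ) (integrable_ite_le hY hT) m, hq] with ω hsub hω
  simp [hsub, hω, condExp_const hm]

variable {E : Type*} [NormedAddCommGroup E] [NormedSpace ℝ E]

lemma integrable_div_smul_of_abs_le_one {S π : Ω → ℝ} {g : Ω → E} {σ₀ : ℝ}
    (hg : Integrable g μ) (hS : AEStronglyMeasurable S μ) (hS₁ : ∀ᵐ ω ∂μ, |S ω| ≤ 1)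
    (hπ : AEStronglyMeasurable π μ) (hσ₀ : 0 < σ₀) (hπσ₀ : ∀ᵐ ω ∂μ, σ₀ ≤ π ω) :
    Integrable (fun ω => (S ω / π ω) • g ω) μ := by
  refine hg.bdd_smul (φ := fun ω => S ω / π ω) σ₀⁻¹ (hS.mul hπ.inv₀) ?_
  filter_upwards [hS₁, hπσ₀] with ω hSω hπω
  rw [Real.norm_eq_abs, abs_div, abs_of_pos (hσ₀.trans_le hπω), ← one_div]
  exact div_le_div₀ zero_le_one hSω hσ₀ hπω

lemma integral_smul_eq_zero_of_condExp_ae_eq_zero [CompleteSpace E] (hm : m ≤ m₀)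
    [SigmaFinite (μ.trim hm)] {f : Ω → ℝ} {g : Ω → E} (hf : Integrable f μ)
    (hfg : Integrable (f • g) μ) (hg : AEStronglyMeasurable[m] g μ) (hf₀ : μ[f | m] =ᵐ[μ] 0) :
    ∫ ω, f ω • g ω ∂μ = 0 := by
  calc ∫ ω, f ω • g ω ∂μ = ∫ ω, μ[f • g | m] ω ∂μ := (integral_condExp hm).symm
    _ = ∫ ω, (0 : E) ∂μ := by
      refine integral_congr_ae ?_
      filter_upwards [condExp_smul_of_aestronglyMeasurable_right hf hfg hg, hf₀] with ω h h₀
      simp [h, h₀]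
    _ = 0 := integral_zero _ _

lemma integral_div_smul_eq_of_condExp_ae_eq [CompleteSpace E] (hm : m ≤ m₀)
    [SigmaFinite (μ.trim hm)] {S π : Ω → ℝ} {g : Ω → E} (hS : Integrable S μ)
    (hSπ : μ[S | m] =ᵐ[μ] π) (hπ : ∀ᵐ ω ∂μ, π ω ≠ 0) (hg : AEStronglyMeasurable[m] g μ)
    (hint : Integrable (fun ω => (S ω / π ω) • g ω) μ) :
    ∫ ω, (S ω / π ω) • g ω ∂μ = ∫ ω, g ω ∂μ := by
  set h : Ω → E := π⁻¹ • g
  have hπm : AEStronglyMeasurable[m] π μ :=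
    stronglyMeasurable_condExp.aestronglyMeasurable.congr hSπ
  have hhm : AEStronglyMeasurable[m] h μ := hπm.inv₀.smul hg
  have hSh : (fun ω => (S ω / π ω) • g ω) = S • h := by
    ext ω; simp [h, div_eq_mul_inv, mul_smul]
  rw [hSh] at hint ⊢
  calc ∫ ω, (S • h) ω ∂μ = ∫ ω, μ[S • h | m] ω ∂μ := (integral_condExp hm).symm
    _ = ∫ ω, g ω ∂μ := by
      refine integral_congr_ae ?_
      filter_upwards [condExp_smul_of_aestronglyMeasurable_right hS hint hhm, hSπ, hπ]
        with ω hω hSω hπω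
      simp [hω, hSω, h, smul_inv_smul₀ hπω]

end

theorem ipw_moment_unbiased_general
    {Ω E : Type*} [MeasurableSpace Ω] {mE : MeasurableSpace E}
    (P : Measure Ω) [IsProbabilityMeasure P]
    (τ σ₀ lam : ℝ) (hτ : τ ∈ Set.Ioo (0 : ℝ) 1) (hσ₀ : 0 < σ₀)
    {p : ℕ} (θ₀ Z : EuclideanSpace ℝ (Fin p))
    (X : Ω → EuclideanSpace ℝ (Fin p)) (hXmeas : Measurable X)
    (hXint : Integrable (fun ω => ‖X ω‖) P)
    (Y : Ω → ℝ)
    (W : Ω → E) (hWmeas : Measurable W)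
    (S : Ω → ℝ) (hSmeas : Measurable S) (hS01 : ∀ ω, S ω = 0 ∨ S ω = 1)
    (π : Ω → ℝ)
    (hπ : ∀ᵐ ω ∂P, σ₀ ≤ π ω)
    (α : Ω → ℝ) (hαmeas : Measurable α)
    (hi : P[S | MeasurableSpace.comap W mE ⊔ MeasurableSpace.comap X inferInstance] =ᵐ[P] π)
    (hii : Measurable[MeasurableSpace.comap W mE ⊔ MeasurableSpace.comap X inferInstance] Y)
    (hiii : P[(fun ω => if Y ω ≤ ⟪X ω, θ₀⟫ then (1 : ℝ) else 0) |
        MeasurableSpace.comap X inferInstance] =ᵐ[P] fun _ => τ)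
    (hiv : P {ω | α ω ≤ 0} = ENNReal.ofReal τ) :
    ∫ ω, (((S ω / π ω) * psi τ (Y ω - ⟪X ω, θ₀⟫)) • X ω
        - (lam * psi τ (α ω)) • Z) ∂P = 0 := by
  have hXσ : MeasurableSpace.comap X inferInstance ≤ ‹MeasurableSpace Ω› := hXmeas.comap_le
  have hWXσ : MeasurableSpace.comap W mE ⊔ MeasurableSpace.comap X inferInstance
      ≤ ‹MeasurableSpace Ω› := sup_le hWmeas.comap_le hXσ
  have hXX : Measurable[MeasurableSpace.comap X inferInstance] X := comap_measurable X
  have hinner : Measurable[MeasurableSpace.comap X inferInstance] fun ω => ⟪X ω, θ₀⟫ :=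
    hXX.inner measurable_const
  have hψ : Measurable[MeasurableSpace.comap W mE ⊔ MeasurableSpace.comap X inferInstance]
      fun ω => psi τ (Y ω - ⟪X ω, θ₀⟫) :=
    (measurable_psi τ).comp (hii.sub (hinner.mono le_sup_right le_rfl))
  have hY : Measurable Y := hii.mono hWXσ le_rfl
  have hXθ₀ : Measurable fun ω => ⟪X ω, θ₀⟫ := hinner.mono hXσ le_rfl
  have hψX : Integrable (fun ω => psi τ (Y ω - ⟪X ω, θ₀⟫) • X ω) P :=
    ((integrable_norm_iff hXmeas.aestronglyMeasurable).1 hXint).bdd_smul (|τ| + 1)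
      ((measurable_psi τ).comp (hY.sub hXθ₀)).aestronglyMeasurable
      (ae_of_all _ fun _ => abs_psi_le _ _)
  have hS_bdd : ∀ ω, |S ω| ≤ 1 := fun ω => by rcases hS01 ω with h | h <;> simp [h]
  have hS : Integrable S P := .of_bound hSmeas.aestronglyMeasurable 1 (ae_of_all _ hS_bdd)
  have hweighted := integrable_div_smul_of_abs_le_one hψX hS.aestronglyMeasurable
    (ae_of_all _ hS_bdd) ((stronglyMeasurable_condExp.aestronglyMeasurable.congr hi).mono hWXσ)
    hσ₀ hπ
  have hmoment : ∫ ω, ((S ω / π ω) * psi τ (Y ω - ⟪X ω, θ₀⟫)) • X ω ∂P = 0 := by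
    simp_rw [mul_smul]
    rw [integral_div_smul_eq_of_condExp_ae_eq (g := fun ω => psi τ (Y ω - ⟪X ω, θ₀⟫) • X ω)
      hWXσ hS hi (hπ.mono fun _ h => (hσ₀.trans_le h).ne')
      (hψ.smul (hXX.mono le_sup_right le_rfl)).aestronglyMeasurable hweighted]
    exact integral_smul_eq_zero_of_condExp_ae_eq_zero hXσ
      (integrable_psi_comp τ (hY.sub hXθ₀)) hψX hXX.aestronglyMeasurable
      (condExp_psi_sub_ae_eq_zero hXσ hY hXθ₀ hiii)
  have hpenalty : ∫ ω, (lam * psi τ (α ω)) • Z ∂P = 0 := by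
    rw [integral_smul_const, integral_const_mul, integral_psi_comp τ hαmeas, measureReal_def,
      hiv, ENNReal.toReal_ofReal hτ.1.le, sub_self, mul_zero, zero_smul]
  rw [integral_sub (by simpa only [mul_smul] using hweighted)
    (((integrable_psi_comp τ hαmeas).const_mul lam).smul_const Z), hmoment, hpenalty, sub_zero]

/-- Proposition 1: unbiasedness of the inverse-probability-weighted penalized moment
function.  Under (i) `E[S | σ(W,X)] = π`, (ii) `Y` is `σ(W,X)`-measurable, (iii) `X'θ₀` is
the conditional `τ`-quantile of `Y` given `X`, and (iv) `P(α ≤ 0) = τ`, one has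
`E[(S/π) X ψ_τ(Y - X'θ₀) - λ Z ψ_τ(α)] = 0`. -/
theorem ipw_moment_unbiased
    {Ω E : Type*} [MeasurableSpace Ω] {mE : MeasurableSpace E}
    (P : Measure Ω) [IsProbabilityMeasure P]
    (τ σ₀ lam : ℝ) (hτ : τ ∈ Set.Ioo (0 : ℝ) 1) (hσ₀ : 0 < σ₀) (hlam : 0 ≤ lam)
    {p : ℕ} (θ₀ Z : EuclideanSpace ℝ (Fin p))
    (X : Ω → EuclideanSpace ℝ (Fin p)) (hXmeas : Measurable X)
    (hXint : Integrable (fun ω => ‖X ω‖) P)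
    (Y : Ω → ℝ) (hYmeas : Measurable Y)
    (W : Ω → E) (hWmeas : Measurable W)
    (S : Ω → ℝ) (hSmeas : Measurable S) (hS01 : ∀ ω, S ω = 0 ∨ S ω = 1)
    (π : Ω → ℝ)
    (hπmeas : Measurable[MeasurableSpace.comap W mE ⊔ MeasurableSpace.comap X inferInstance] π)
    (hπ : ∀ᵐ ω ∂P, σ₀ ≤ π ω)
    (α : Ω → ℝ) (hαmeas : Measurable α)
    (hi : P[S | MeasurableSpace.comap W mE ⊔ MeasurableSpace.comap X inferInstance] =ᵐ[P] π)
    (hii : Measurable[MeasurableSpace.comap W mE ⊔ MeasurableSpace.comap X inferInstance] Y)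
    (hiii : P[(fun ω => if Y ω ≤ ⟪X ω, θ₀⟫ then (1 : ℝ) else 0) |
        MeasurableSpace.comap X inferInstance] =ᵐ[P] fun _ => τ)
    (hiv : P {ω | α ω ≤ 0} = ENNReal.ofReal τ) :
    ∫ ω, (((S ω / π ω) * psi τ (Y ω - ⟪X ω, θ₀⟫)) • X ω
        - (lam * psi τ (α ω)) • Z) ∂P = 0 :=
  ipw_moment_unbiased_general P τ σ₀ lam hτ hσ₀ θ₀ Z X hXmeas hXint Y W hWmeas S hSmeas hS01 π hπ α
    hαmeas hi hii hiii hiv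
end

section
/- Let u be a real random variable on a probability space with P(u = 0) = 0, and let F(s) := P(u ≤ s) denote its cumulative distribution function. Then for every τ ∈ (0,1) and every δ ∈ ℝ, the random variable ρ_τ(u − δ) − ρ_τ(u) is bounded (by |δ|) and E[ρ_τ(u − δ) − ρ_τ(u)] = ∫₀^δ (F(s) − τ) ds, where the integral is the signed (oriented) integral from 0 to δ. -/
/-!
Knight's identity `ρ_τ(a - δ) - ρ_τ(a) = ∫₀^δ (1{a ≤ s} - τ) ds` holds pointwise: the step
`s ↦ 1{a ≤ s}` is the right derivative of `s ↦ max s a`, so the integral equals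
`max δ a - max 0 a - δτ`, which a case split identifies with the left-hand side. The integrand is
bounded, so Fubini lets us take expectations inside the `ds`-integral, where
`E[1{u ≤ s}] = F(s)`. The bound by `|δ|` comes from the same closed form, since
`max δ a - max 0 a` lies between `0` and `δ`.
-/

open MeasureTheory intervalIntegral

/-- The quantile regression check function `ρ_τ(u) = u (τ - 1{u < 0})`. -/
noncomputable def rho (τ u : ℝ) : ℝ := u * (τ - if u < 0 then 1 else 0)

open Set

lemma hasDerivWithinAt_max_const_Ioi (a s : ℝ) :
    HasDerivWithinAt (fun t => max t a) (if a ≤ s then 1 else 0) (Ioi s) s := by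
  split_ifs with has
  · exact (hasDerivWithinAt_id s _).congr (fun t ht => max_eq_left (has.trans (le_of_lt ht)))
      (max_eq_left has)
  · have hsa : s < a := not_le.1 has
    refine (hasDerivAt_const s a).hasDerivWithinAt.congr_of_eventuallyEq ?_ (max_eq_right hsa.le)
    filter_upwards [nhdsWithin_le_nhds (eventually_lt_nhds hsa)] with t ht
    exact max_eq_right ht.le

lemma monotone_ite_le (a : ℝ) : Monotone fun s => if a ≤ s then (1 : ℝ) else 0 :=
  fun s t hst => by beta_reduce; split_ifs <;> grind

lemma integral_ite_le (a b c : ℝ) :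
    ∫ s in b..c, (if a ≤ s then (1 : ℝ) else 0) = max c a - max b a :=
  integral_eq_sub_of_hasDeriv_right (continuous_id.max continuous_const).continuousOn
    (fun s _ => hasDerivWithinAt_max_const_Ioi a s) (monotone_ite_le a).intervalIntegrable

lemma rho_sub_sub_rho (τ a δ : ℝ) :
    rho τ (a - δ) - rho τ a = max δ a - max 0 a - δ * τ := by
  simp only [rho, max_def]
  split_ifs <;> linarith

lemma rho_sub_sub_rho_eq_integral (τ a δ : ℝ) :
    rho τ (a - δ) - rho τ a = ∫ s in (0 : ℝ)..δ, ((if a ≤ s then (1 : ℝ) else 0) - τ) := by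
  rw [integral_sub (monotone_ite_le a).intervalIntegrable intervalIntegrable_const,
    integral_ite_le, intervalIntegral.integral_const, smul_eq_mul, rho_sub_sub_rho]
  ring

lemma abs_rho_sub_sub_rho_le {τ : ℝ} (hτ : τ ∈ Icc (0 : ℝ) 1) (a δ : ℝ) :
    |rho τ (a - δ) - rho τ a| ≤ |δ| := by
  obtain ⟨hτ0, hτ1⟩ := hτ
  rw [rho_sub_sub_rho, abs_le]
  rcases le_total 0 δ with hδ | hδ
  · have hlow : 0 ≤ max δ a - max 0 a := sub_nonneg.2 (max_le_max_right a hδ)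
    have hup : max δ a - max 0 a ≤ δ := by simp only [max_def]; split_ifs <;> linarith
    rw [abs_of_nonneg hδ]
    constructor <;> nlinarith
  · have hup : max δ a - max 0 a ≤ 0 := sub_nonpos.2 (max_le_max_right a hδ)
    have hlow : δ ≤ max δ a - max 0 a := by simp only [max_def]; split_ifs <;> linarith
    rw [abs_of_nonpos hδ]
    constructor <;> nlinarith

lemma integral_integral_ite_le_sub {Ω : Type*} [MeasurableSpace Ω] (P : Measure Ω)
    [IsProbabilityMeasure P] {u : Ω → ℝ} (hu : Measurable u) (τ b c : ℝ) :
    ∫ ω, (∫ s in b..c, ((if u ω ≤ s then (1 : ℝ) else 0) - τ)) ∂P =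
      ∫ s in b..c, ((P {ω | u ω ≤ s}).toReal - τ) := by
  have : IsFiniteMeasure (volume.restrict (uIoc b c)) := isFiniteMeasure_restrict.2 (by simp)
  have hmeas : Measurable fun p : ℝ × Ω => (if u p.2 ≤ p.1 then (1 : ℝ) else 0) - τ :=
    (Measurable.ite (measurableSet_le (hu.comp measurable_snd) measurable_fst)
      measurable_const measurable_const).sub_const τ
  have hbound : ∀ p : ℝ × Ω, ‖(if u p.2 ≤ p.1 then (1 : ℝ) else 0) - τ‖ ≤ 1 + ‖τ‖ := fun p =>
    (norm_sub_le _ _).trans (by gcongr; split_ifs <;> simp)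
  rw [← intervalIntegral_integral_swap
    (Integrable.of_bound hmeas.aestronglyMeasurable _ (.of_forall hbound))]
  congr 1; funext s
  have hset : MeasurableSet {ω | u ω ≤ s} := hu measurableSet_Iic
  have hind : (fun ω => if u ω ≤ s then (1 : ℝ) else 0) = {ω | u ω ≤ s}.indicator 1 := by
    ext ω; simp [indicator_apply]
  rw [integral_sub (hind ▸ (integrable_const 1).indicator hset) (integrable_const τ), hind,
    integral_indicator_one hset, MeasureTheory.integral_const, probReal_univ, one_smul,
    measureReal_def]

theorem expected_knight_expansion_general
    {Ω : Type*} [MeasurableSpace Ω] (P : Measure Ω) [IsProbabilityMeasure P]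
    (u : Ω → ℝ) (hu : Measurable u)
    (τ : ℝ) (hτ : τ ∈ Set.Ioo (0 : ℝ) 1) (δ : ℝ) :
    (∀ ω, |rho τ (u ω - δ) - rho τ (u ω)| ≤ |δ|) ∧
      ∫ ω, (rho τ (u ω - δ) - rho τ (u ω)) ∂P =
        ∫ s in (0 : ℝ)..δ, ((P {ω | u ω ≤ s}).toReal - τ) := by
  refine ⟨fun ω => abs_rho_sub_sub_rho_le (Ioo_subset_Icc_self hτ) (u ω) δ, ?_⟩
  simp_rw [rho_sub_sub_rho_eq_integral]
  exact integral_integral_ite_le_sub P hu τ 0 δ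

/-- Expected Knight expansion: if `P(u = 0) = 0` then for every `τ ∈ (0,1)` and `δ ∈ ℝ`,
`ρ_τ(u - δ) - ρ_τ(u)` is bounded by `|δ|` and
`E[ρ_τ(u - δ) - ρ_τ(u)] = ∫₀^δ (F(s) - τ) ds`, where `F(s) = P(u ≤ s)`. -/
theorem expected_knight_expansion
    {Ω : Type*} [MeasurableSpace Ω] (P : Measure Ω) [IsProbabilityMeasure P]
    (u : Ω → ℝ) (hu : Measurable u) (h0 : P {ω | u ω = 0} = 0)
    (τ : ℝ) (hτ : τ ∈ Set.Ioo (0 : ℝ) 1) (δ : ℝ) :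
    (∀ ω, |rho τ (u ω - δ) - rho τ (u ω)| ≤ |δ|) ∧
      ∫ ω, (rho τ (u ω - δ) - rho τ (u ω)) ∂P =
        ∫ s in (0 : ℝ)..δ, ((P {ω | u ω ≤ s}).toReal - τ) :=
  expected_knight_expansion_general P u hu τ hτ δ
end

section
/- Let (E, ℰ) be a measurable space and let X₁, X₂, … be independent and identically distributed E-valued random elements on a probability space. Let B ⊆ ℝ^d be compact, and let f : ℝ^d × E → ℝ be such that f(θ, ·) is measurable for each θ, and there are constants M > 0 and κ > 0 with |f(θ, x)| ≤ M for all θ ∈ B and x ∈ E, and |f(θ, x) − f(θ', x)| ≤ κ·‖θ − θ'‖₁ for all θ, θ' ∈ B and x ∈ E. Then for every ε > 0 there exist K ∈ ℕ and D > 0 such that for every T ≥ 1, P( sup_{θ ∈ B} | (1/T)·Σ_{t=1}^T ( f(θ, X_t) − E[f(θ, X₁)] ) | ≥ ε ) ≤ 2K·exp(−D·T). -/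
/-!
Cover `B` by finitely many `ℓ¹`-balls of radius `ε / (8κ)` centred in `B`. By the Lipschitz
bound, the centred empirical mean moves by at most `ε / 4` within a ball, uniformly in `ω`, so a
supremum of at least `ε` forces a deviation of at least `ε / 2` at one of the `K` centres. At each
centre the summands are independent and bounded by `M`, hence sub-Gaussian by Hoeffding's lemma,
and Hoeffding's inequality bounds both tails by `exp (-ε² T / (8 M²))`; a union bound finishes.
-/

open MeasureTheory ProbabilityTheory Real Finset

lemma abs_one_div_mul_sum_range_le {w : ℕ → ℝ} {b : ℝ} (hw : ∀ t, |w t| ≤ b) (T : ℕ) :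
    |(1 / (T : ℝ)) * ∑ t ∈ range T, w t| ≤ b := by
  rcases T.eq_zero_or_pos with rfl | hT
  · simpa using (abs_nonneg (w 0)).trans (hw 0)
  have hsum : |∑ t ∈ range T, w t| ≤ T * b := by
    simpa using (abs_sum_le_sum_abs w (range T)).trans (sum_le_card_nsmul _ _ _ fun t _ => hw t)
  rw [abs_mul, abs_of_pos (by positivity), one_div_mul_eq_div, div_le_iff₀ (by positivity)]
  linarith

lemma ProbabilityTheory.HasSubgaussianMGF.measure_le_abs_sum_range_le_of_iIndepFun
    {Ω : Type*} {mΩ : MeasurableSpace Ω} {μ : Measure Ω} [IsFiniteMeasure μ]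
    {Y : ℕ → Ω → ℝ} (h_indep : iIndepFun Y μ) {c : NNReal} {T : ℕ}
    (h_subG : ∀ t < T, HasSubgaussianMGF (Y t) c μ) {ε : ℝ} (hε : 0 ≤ ε) :
    μ {ω | ε ≤ |∑ t ∈ range T, Y t ω|} ≤ ENNReal.ofReal (2 * exp (-ε ^ 2 / (2 * T * c))) := by
  have h_upper := HasSubgaussianMGF.measure_sum_range_ge_le_of_iIndepFun h_indep h_subG hε
  have h_lower := HasSubgaussianMGF.measure_sum_range_ge_le_of_iIndepFun
    (h_indep.comp (fun _ => Neg.neg) fun _ => measurable_neg) (fun t ht => (h_subG t ht).neg) hε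
  simp only [Function.comp_apply, sum_neg_distrib] at h_lower
  calc μ {ω | ε ≤ |∑ t ∈ range T, Y t ω|}
      ≤ μ ({ω | ε ≤ ∑ t ∈ range T, Y t ω} ∪ {ω | ε ≤ -∑ t ∈ range T, Y t ω}) :=
        measure_mono fun ω (hω : ε ≤ _) => by
          simpa only [Set.mem_union, Set.mem_ofPred_eq] using le_abs.mp hω
    _ ≤ μ {ω | ε ≤ ∑ t ∈ range T, Y t ω} + μ {ω | ε ≤ -∑ t ∈ range T, Y t ω} :=
        measure_union_le _ _
    _ ≤ _ := by
        rw [← ofReal_measureReal, ← ofReal_measureReal, ← ENNReal.ofReal_add, two_mul]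
        · exact ENNReal.ofReal_le_ofReal (add_le_add h_upper h_lower)
        all_goals positivity

lemma sum_abs_sub_le_card_mul_dist {ι : Type*} [Fintype ι] (x y : ι → ℝ) :
    ∑ j, |x j - y j| ≤ Fintype.card ι * dist x y := by
  simpa [← Real.dist_eq] using sum_le_card_nsmul univ _ _ fun j _ => dist_le_pi_dist x y j

lemma IsCompact.exists_finset_forall_sum_abs_sub_le {ι : Type*} [Fintype ι] {B : Set (ι → ℝ)}
    (hB : IsCompact B) {r : ℝ} (hr : 0 < r) :
    ∃ C : Finset (ι → ℝ), ↑C ⊆ B ∧ ∀ θ ∈ B, ∃ θ' ∈ C, ∑ j, |θ j - θ' j| ≤ r := by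
  obtain ⟨C, hCB, hCfin, hcover⟩ := hB.finite_cover_balls (e := r / (Fintype.card ι + 1))
    (by positivity)
  refine ⟨hCfin.toFinset, by simpa using hCB, fun θ hθ => ?_⟩
  obtain ⟨θ', hθ'C, hball⟩ := Set.mem_iUnion₂.mp (hcover hθ)
  refine ⟨θ', hCfin.mem_toFinset.mpr hθ'C, (sum_abs_sub_le_card_mul_dist θ θ').trans ?_⟩
  calc (Fintype.card ι : ℝ) * dist θ θ'
      ≤ (Fintype.card ι + 1) * (r / (Fintype.card ι + 1)) := by
        gcongr
        · linarith
        · exact (Metric.mem_ball.mp hball).le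
    _ = r := by field_simp

lemma setOf_le_iSup_abs_subset_biUnion {ι Ω : Type*} {B C : Set ι} (G : ι → Ω → ℝ) {ε : ℝ}
    (hε : 0 < ε) (hnet : ∀ θ ∈ B, ∃ θ' ∈ C, ∀ ω, |G θ ω - G θ' ω| ≤ ε / 4) :
    {ω | ε ≤ ⨆ θ : B, |G θ ω|} ⊆ ⋃ θ' ∈ C, {ω | ε / 2 ≤ |G θ' ω|} := by
  intro ω (hω : ε ≤ _)
  -- `Real.iSup_le` needs no boundedness: an unbounded supremum is `0` in `ℝ`.
  obtain ⟨θ, hθ⟩ : ∃ θ : B, 3 * ε / 4 < |G θ ω| := by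
    by_contra! h
    linarith [Real.iSup_le h (by positivity)]
  obtain ⟨θ', hθ'C, hclose⟩ := hnet θ θ.2
  have := abs_sub_abs_le_abs_sub (G θ ω) (G θ' ω)
  exact Set.mem_biUnion hθ'C (show ε / 2 ≤ _ by linarith [hclose ω])

section EmpiricalDeviation

variable {Ω E : Type*} [MeasurableSpace Ω] {mE : MeasurableSpace E}

noncomputable def empiricalDeviation (P : Measure Ω) (X : ℕ → Ω → E) (g : E → ℝ) (T : ℕ)
    (ω : Ω) : ℝ :=
  (1 / (T : ℝ)) * ∑ t ∈ range T, (g (X t ω) - ∫ ω', g (X 0 ω') ∂P)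

lemma abs_empiricalDeviation_sub_le {P : Measure Ω} [IsProbabilityMeasure P]
    {X : ℕ → Ω → E} {g g' : E → ℝ} (hg : Integrable (fun ω => g (X 0 ω)) P)
    (hg' : Integrable (fun ω => g' (X 0 ω)) P) {a : ℝ} (hgg' : ∀ x, |g x - g' x| ≤ a)
    (T : ℕ) (ω : Ω) :
    |empiricalDeviation P X g T ω - empiricalDeviation P X g' T ω| ≤ 2 * a := by
  have hmean : |∫ ω', g (X 0 ω') ∂P - ∫ ω', g' (X 0 ω') ∂P| ≤ a := by
    rw [← integral_sub hg hg']
    simpa using norm_integral_le_of_norm_le_const (μ := P)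
      (f := fun ω' => g (X 0 ω') - g' (X 0 ω')) (ae_of_all _ fun ω' => hgg' (X 0 ω'))
  rw [empiricalDeviation, empiricalDeviation, ← mul_sub, ← sum_sub_distrib]
  refine abs_one_div_mul_sum_range_le (fun t => ?_) T
  calc |g (X t ω) - ∫ ω', g (X 0 ω') ∂P - (g' (X t ω) - ∫ ω', g' (X 0 ω') ∂P)|
      = |(g (X t ω) - g' (X t ω)) - (∫ ω', g (X 0 ω') ∂P - ∫ ω', g' (X 0 ω') ∂P)| := by
        congr 1; ring
    _ ≤ a + a := (abs_sub _ _).trans (add_le_add (hgg' _) hmean)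
    _ = 2 * a := by ring

lemma measure_le_abs_empiricalDeviation_le {P : Measure Ω} [IsProbabilityMeasure P]
    {X : ℕ → Ω → E} (hX : ∀ t, Measurable (X t)) (hindep : iIndepFun X P)
    (hident : ∀ t, IdentDistrib (X t) (X 0) P P) {g : E → ℝ} (hg : Measurable g) {M : ℝ}
    (hgM : ∀ x, |g x| ≤ M) {ε : ℝ} (hε : 0 ≤ ε) {T : ℕ} (hT : 0 < T) :
    P {ω | ε ≤ |empiricalDeviation P X g T ω|} ≤
      ENNReal.ofReal (2 * exp (-(ε ^ 2 / (2 * M ^ 2)) * T)) := by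
  -- Hoeffding's lemma for values in `[-M, M]`: the parameter is `M ^ 2`.
  have h_subG : ∀ t, HasSubgaussianMGF (fun ω => g (X t ω) - ∫ ω', g (X 0 ω') ∂P)
      ((‖M - -M‖₊ / 2) ^ 2) P := fun t => by
    have hmean : ∫ ω, g (X t ω) ∂P = ∫ ω, g (X 0 ω) ∂P := ((hident t).comp hg).integral_eq
    rw [← hmean]
    exact hasSubgaussianMGF_of_mem_Icc (hg.comp (hX t)).aemeasurable
      (ae_of_all _ fun ω => abs_le.mp (hgM _))
  have hc : (((‖M - -M‖₊ / 2) ^ 2 : NNReal) : ℝ) = M ^ 2 := by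
    simp [← two_mul]
  have hset : {ω | ε ≤ |empiricalDeviation P X g T ω|} =
      {ω | T * ε ≤ |∑ t ∈ range T, (g (X t ω) - ∫ ω', g (X 0 ω') ∂P)|} := by
    ext ω
    simp only [Set.mem_ofPred_eq, empiricalDeviation, one_div_mul_eq_div, abs_div, Nat.abs_cast,
      le_div_iff₀ (by positivity : (0 : ℝ) < T), mul_comm]
  rw [hset]
  refine (HasSubgaussianMGF.measure_le_abs_sum_range_le_of_iIndepFun
    (hindep.comp _ fun _ => hg.sub_const _) (fun t _ => h_subG t) (by positivity)).trans_eq ?_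
  rw [hc, show ((T : ℝ) * ε) ^ 2 = T * (T * ε ^ 2) by ring,
    show 2 * (T : ℝ) * M ^ 2 = T * (2 * M ^ 2) by ring, neg_div,
    mul_div_mul_left _ _ (by positivity)]
  ring_nf

end EmpiricalDeviation

/-- Uniform exponential concentration over a compact parameter set: for i.i.d. data
`X₁, X₂, …` and a family `f(θ, ·)` uniformly bounded by `M` and uniformly Lipschitz in
`θ` (ℓ1 norm, constant `κ`) over a compact `B ⊆ ℝ^d`, for every `ε > 0` there are `K ∈ ℕ`
and `D > 0` with
`P( sup_{θ ∈ B} |(1/T) Σ_{t=1}^T (f(θ, X_t) - E f(θ, X₁))| ≥ ε ) ≤ 2K exp(-D T)`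
for all `T ≥ 1`. -/
theorem uniform_exponential_concentration
    {Ω E : Type*} [MeasurableSpace Ω] {mE : MeasurableSpace E}
    (P : Measure Ω) [IsProbabilityMeasure P]
    (X : ℕ → Ω → E) (hXmeas : ∀ t, Measurable (X t))
    (hindep : iIndepFun (m := fun _ => mE) X P)
    (hident : ∀ t, IdentDistrib (X t) (X 0) P P)
    {d : ℕ} (B : Set (Fin d → ℝ)) (hB : IsCompact B)
    (f : (Fin d → ℝ) → E → ℝ) (hfmeas : ∀ θ, Measurable (f θ))
    (M κ : ℝ) (hM : 0 < M) (hκ : 0 < κ)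
    (hbd : ∀ θ ∈ B, ∀ x, |f θ x| ≤ M)
    (hlip : ∀ θ ∈ B, ∀ θ' ∈ B, ∀ x,
      |f θ x - f θ' x| ≤ κ * ∑ j : Fin d, |θ j - θ' j|) :
    ∀ ε : ℝ, 0 < ε → ∃ (K : ℕ) (D : ℝ), 0 < D ∧ ∀ T : ℕ, 1 ≤ T →
      P {ω | ε ≤ ⨆ θ : B, |(1 / (T : ℝ)) *
          ∑ t ∈ Finset.range T, (f θ (X t ω) - ∫ ω', f θ (X 0 ω') ∂P)|} ≤
        ENNReal.ofReal (2 * K * Real.exp (-D * T)) := by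
  intro ε hε
  obtain ⟨C, hCB, hC⟩ := hB.exists_finset_forall_sum_abs_sub_le (r := ε / (8 * κ)) (by positivity)
  refine ⟨C.card, ε ^ 2 / (8 * M ^ 2), by positivity, fun T hT => ?_⟩
  have hint : ∀ θ ∈ B, Integrable (fun ω => f θ (X 0 ω)) P := fun θ hθ =>
    .of_bound ((hfmeas θ).comp (hXmeas 0)).aestronglyMeasurable M
      (ae_of_all _ fun ω => hbd θ hθ (X 0 ω))
  have hnet : ∀ θ ∈ B, ∃ θ' ∈ (C : Set (Fin d → ℝ)), ∀ ω,
      |empiricalDeviation P X (f θ) T ω - empiricalDeviation P X (f θ') T ω| ≤ ε / 4 := by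
    intro θ hθ
    obtain ⟨θ', hθ'C, hθθ'⟩ := hC θ hθ
    have hclose : ∀ x, |f θ x - f θ' x| ≤ ε / 8 := fun x =>
      calc |f θ x - f θ' x| ≤ κ * ∑ j, |θ j - θ' j| := hlip θ hθ θ' (hCB hθ'C) x
        _ ≤ κ * (ε / (8 * κ)) := by gcongr
        _ = ε / 8 := by field_simp
    refine ⟨θ', hθ'C, fun ω => ?_⟩
    linarith [abs_empiricalDeviation_sub_le (hint θ hθ) (hint θ' (hCB hθ'C)) hclose T ω]
  calc P {ω | ε ≤ ⨆ θ : B, |empiricalDeviation P X (f θ) T ω|}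
      ≤ P (⋃ θ ∈ C, {ω | ε / 2 ≤ |empiricalDeviation P X (f θ) T ω|}) :=
        measure_mono (setOf_le_iSup_abs_subset_biUnion _ hε hnet)
    _ ≤ ∑ θ ∈ C, P {ω | ε / 2 ≤ |empiricalDeviation P X (f θ) T ω|} :=
        measure_biUnion_finset_le _ _
    _ ≤ ∑ θ ∈ C, ENNReal.ofReal (2 * exp (-((ε / 2) ^ 2 / (2 * M ^ 2)) * T)) :=
        sum_le_sum fun θ hθ => measure_le_abs_empiricalDeviation_le hXmeas hindep hident
          (hfmeas θ) (hbd θ (hCB hθ)) (by positivity) hT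
    _ = ENNReal.ofReal (2 * C.card * exp (-(ε ^ 2 / (8 * M ^ 2)) * T)) := by
        rw [sum_const, nsmul_eq_mul, ← ENNReal.ofReal_natCast,
          ← ENNReal.ofReal_mul (by positivity)]
        ring_nf
end

section
/- (Lemma 1, sequential form.) Let d ≥ 1 and for each n ∈ ℕ let S_n, T_n : ℝ^d → ℝ with S_n convex. Suppose δ_n := sup_{θ ∈ ℝ^d} |S_n(θ) − T_n(θ)| is finite for each n and δ_n → 0. Let θ̂_n be a minimizer of S_n and θ̃_n a minimizer of T_n over ℝ^d, and suppose the minima of S_n are uniformly well separated: for every ε > 0 there exists η > 0 such that inf{ S_n(θ) : ‖θ − θ̂_n‖ = ε } − S_n(θ̂_n) ≥ η for all n. Then ‖θ̃_n − θ̂_n‖ → 0 as n → ∞. -/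
open Filter

/-!
If `θ̃_n` stayed at distance `≥ ε` from `θ̂_n`, convexity of `S_n` would carry the separation
gap `η` from the sphere of radius `ε` about `θ̂_n` out to `θ̃_n`, giving `S_n θ̃_n ≥ S_n θ̂_n + η`.
But `θ̃_n` minimizes `T_n`, which is uniformly `δ_n`-close to `S_n`, so
`S_n θ̃_n ≤ S_n θ̂_n + 2 δ_n`, and `2 δ_n < η` for large `n`.
-/

theorem ConvexOn.le_of_le_on_sphere_of_le_norm_sub {E : Type*} [SeminormedAddCommGroup E]
    [NormedSpace ℝ E] {f : E → ℝ} (hf : ConvexOn ℝ Set.univ f) {x z : E} {ε c : ℝ}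
    (hε : 0 < ε) (hx : f x ≤ c) (hsphere : ∀ y, ‖y - x‖ = ε → c ≤ f y) (hz : ε ≤ ‖z - x‖) :
    c ≤ f z := by
  have hr : 0 < ‖z - x‖ := hε.trans_le hz
  set t := ε / ‖z - x‖
  have ht : 0 < t := div_pos hε hr
  have ht₁ : 0 ≤ 1 - t := sub_nonneg.2 ((div_le_one hr).2 hz)
  have hy : ‖(1 - t) • x + t • z - x‖ = ε := by
    rw [show (1 - t) • x + t • z - x = t • (z - x) by module, norm_smul,
      Real.norm_of_nonneg ht.le, div_mul_cancel₀ _ hr.ne']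
  have hcy := hsphere _ hy
  exact hcy.trans (hf.le_right_of_left_le' trivial trivial ht₁ ht (by ring) (hx.trans hcy))

theorem apply_le_apply_add_two_mul_of_abs_sub_le {α : Type*} {S T : α → ℝ} {δ : ℝ} {a : α}
    (hT : ∀ b, T a ≤ T b) (hST : ∀ b, |S b - T b| ≤ δ) (b : α) : S a ≤ S b + 2 * δ := by
  linarith [hT b, (abs_le.1 (hST a)).2, (abs_le.1 (hST b)).1]

theorem minimizers_asymptotically_equivalent_general
    (d : ℕ)
    (S T : ℕ → EuclideanSpace ℝ (Fin d) → ℝ)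
    (hconv : ∀ n, ConvexOn ℝ Set.univ (S n))
    (hbdd : ∀ n, BddAbove (Set.range fun θ => |S n θ - T n θ|))
    (δ : ℕ → ℝ) (hδ : ∀ n, δ n = ⨆ θ, |S n θ - T n θ|)
    (hδ0 : Tendsto δ atTop (nhds 0))
    (θhat θtil : ℕ → EuclideanSpace ℝ (Fin d))
    (hθhat : ∀ n θ, S n (θhat n) ≤ S n θ)
    (hθtil : ∀ n θ, T n (θtil n) ≤ T n θ)
    (hsep : ∀ ε : ℝ, 0 < ε → ∃ η : ℝ, 0 < η ∧ ∀ n,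
      η ≤ sInf (S n '' {θ | ‖θ - θhat n‖ = ε}) - S n (θhat n)) :
    Tendsto (fun n => ‖θtil n - θhat n‖) atTop (nhds 0) := by
  have hδle : ∀ n θ, |S n θ - T n θ| ≤ δ n := fun n θ => (hδ n).symm ▸ le_ciSup (hbdd n) θ
  rw [← tendsto_zero_iff_norm_tendsto_zero, NormedAddGroup.tendsto_nhds_zero]
  intro ε hε
  obtain ⟨η, hη, hsepη⟩ := hsep ε hε
  filter_upwards [hδ0.eventually (gt_mem_nhds (half_pos hη))] with n hδn
  by_contra! hfar
  have hbelow : BddBelow (S n '' {θ | ‖θ - θhat n‖ = ε}) :=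
    ⟨S n (θhat n), Set.forall_mem_image.2 fun θ _ => hθhat n θ⟩
  have hsphere : ∀ θ, ‖θ - θhat n‖ = ε → S n (θhat n) + η ≤ S n θ := fun θ hθ => by
    linarith [hsepη n, csInf_le hbelow ⟨θ, hθ, rfl⟩]
  have hgap := (hconv n).le_of_le_on_sphere_of_le_norm_sub hε (by linarith) hsphere hfar
  have hclose := apply_le_apply_add_two_mul_of_abs_sub_le (hθtil n) (hδle n) (θhat n)
  linarith

/-- Lemma 1, sequential form: if `S_n` are convex, `δ_n = sup_θ |S_n θ - T_n θ|` is finite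
for each `n` with `δ_n → 0`, `θ̂_n` minimizes `S_n`, `θ̃_n` minimizes `T_n`, and the minima
of `S_n` are uniformly well separated, then `‖θ̃_n - θ̂_n‖ → 0`. -/
theorem minimizers_asymptotically_equivalent
    (d : ℕ) (hd : 1 ≤ d)
    (S T : ℕ → EuclideanSpace ℝ (Fin d) → ℝ)
    (hconv : ∀ n, ConvexOn ℝ Set.univ (S n))
    (hbdd : ∀ n, BddAbove (Set.range fun θ => |S n θ - T n θ|))
    (δ : ℕ → ℝ) (hδ : ∀ n, δ n = ⨆ θ, |S n θ - T n θ|)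
    (hδ0 : Tendsto δ atTop (nhds 0))
    (θhat θtil : ℕ → EuclideanSpace ℝ (Fin d))
    (hθhat : ∀ n θ, S n (θhat n) ≤ S n θ)
    (hθtil : ∀ n θ, T n (θtil n) ≤ T n θ)
    (hsep : ∀ ε : ℝ, 0 < ε → ∃ η : ℝ, 0 < η ∧ ∀ n,
      η ≤ sInf (S n '' {θ | ‖θ - θhat n‖ = ε}) - S n (θhat n)) :
    Tendsto (fun n => ‖θtil n - θhat n‖) atTop (nhds 0) :=
  minimizers_asymptotically_equivalent_general d S T hconv hbdd δ hδ hδ0 θhat θtil hθhat hθtil hsep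
end
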